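/- In any proper 3-colouring c of G, antipodal unit vectors receive the same colour: for every unit vector x, c(-x) = c(x). -/
import Mathlib


open scoped RealInnerProductSpace

lemma fin3_key : ∀ a p q e : Fin 3, a ≠ p → a ≠ q → p ≠ q → e ≠ p → e ≠ q → e = a := by
  intro a p q e h1 h2 h3 h4 h5
  omega

/-- In any proper 3-colouring of the orthogonality graph on the unit sphere in
`ℝ³`, antipodal unit vectors receive the same colour. -/
theorem antipodal_same_colour
    (c : {x : EuclideanSpace ℝ (Fin 3) // ‖x‖ = 1} → Fin 3)
    (hc : ∀ u v : {x : EuclideanSpace ℝ (Fin 3) // ‖x‖ = 1},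
      ⟪(u : EuclideanSpace ℝ (Fin 3)), (v : EuclideanSpace ℝ (Fin 3))⟫ = 0 →
        c u ≠ c v)
    (x : {x : EuclideanSpace ℝ (Fin 3) // ‖x‖ = 1}) :
    c ⟨-(x : EuclideanSpace ℝ (Fin 3)), by rw [norm_neg]; exact x.2⟩ = c x := by
  have hcard : Module.finrank ℝ (EuclideanSpace ℝ (Fin 3)) = Fintype.card (Fin 3) := by
    simp
  have hv : Orthonormal ℝ (({0} : Set (Fin 3)).restrict
      (fun _ : Fin 3 => (x : EuclideanSpace ℝ (Fin 3)))) := by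
    constructor
    · intro i; exact x.2
    · intro i j hij
      exact absurd (Subsingleton.elim i j) hij
  obtain ⟨b, hb⟩ := hv.exists_orthonormalBasis_extension_of_card_eq hcard
  have hb0 : b 0 = (x : EuclideanSpace ℝ (Fin 3)) := hb 0 rfl
  have hnorm : ∀ i, ‖b i‖ = 1 := fun i => b.orthonormal.1 i
  have hinner : ∀ i j, i ≠ j → ⟪b i, b j⟫ = 0 := fun i j h => b.orthonormal.2 h
  set y : {x : EuclideanSpace ℝ (Fin 3) // ‖x‖ = 1} := ⟨b 1, hnorm 1⟩
  set z : {x : EuclideanSpace ℝ (Fin 3) // ‖x‖ = 1} := ⟨b 2, hnorm 2⟩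
  have hxy : c x ≠ c y := by
    apply hc
    have := hinner 0 1 (by decide)
    rwa [hb0] at this
  have hxz : c x ≠ c z := by
    apply hc
    have := hinner 0 2 (by decide)
    rwa [hb0] at this
  have hyz : c y ≠ c z := hc _ _ (hinner 1 2 (by decide))
  have hny : c ⟨-(x : EuclideanSpace ℝ (Fin 3)), by rw [norm_neg]; exact x.2⟩ ≠ c y := by
    apply hc
    have := hinner 0 1 (by decide)
    rw [hb0] at this
    show ⟪-(x : EuclideanSpace ℝ (Fin 3)), b 1⟫ = 0
    rw [inner_neg_left, this, neg_zero]
  have hnz : c ⟨-(x : EuclideanSpace ℝ (Fin 3)), by rw [norm_neg]; exact x.2⟩ ≠ c z := by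
    apply hc
    have := hinner 0 2 (by decide)
    rw [hb0] at this
    show ⟪-(x : EuclideanSpace ℝ (Fin 3)), b 2⟫ = 0
    rw [inner_neg_left, this, neg_zero]
  exact fin3_key (c x) (c y) (c z) _ hxy hxz hyz hny hnz
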